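/- arXiv:2006.01334 — 3 statements merged into one kernel-verified Lean document; each statement's English description precedes it below -/
import Mathlib

section
/- Let R → S be a ring map, I ⊆ S an ideal, n ≥ 1, and S' = S/I^{n+1}. Then the natural map Ω_{S/R} → Ω_{S'/R} induces an isomorphism Ω_{S/R} ⊗_S (S/I^n) ≅ Ω_{S'/R} ⊗_{S'} (S/I^n). -/
/-!
Tensoring the conormal sequence `I^(n+1)/I^(2n+2) → S' ⊗[S] Ω[S⁄R] → Ω[S'⁄R] → 0` with `S/Iⁿ`
keeps it right exact, and its first map becomes zero: by the Leibniz rule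
`d(I^(n+1)) ⊆ Iⁿ • Ω[S⁄R]`, which `S/Iⁿ` kills.
-/

open TensorProduct

theorem Derivation.apply_mem_pow_smul_top {R S M : Type*} [CommRing R] [CommRing S]
    [Algebra R S] [AddCommGroup M] [Module S M] [Module R M]
    (D : Derivation R S M) (I : Ideal S) :
    ∀ (k : ℕ) {x : S}, x ∈ I ^ (k + 1) → D x ∈ I ^ k • (⊤ : Submodule S M)
  | 0, _, _ => by simp
  | k + 1, x, hx => by
    rw [pow_succ'] at hx
    refine Submodule.mul_induction_on hx (fun a ha b hb => ?_) (fun y z hy hz => ?_)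
    · rw [Derivation.leibniz]
      refine Submodule.add_mem _ ?_ (Submodule.smul_mem_smul hb trivial)
      have := Submodule.smul_mem_smul ha (D.apply_mem_pow_smul_top I k hb)
      rwa [← Submodule.smul_assoc, smul_eq_mul, ← pow_succ'] at this
    · rw [map_add]
      exact Submodule.add_mem _ hy hz

theorem TensorProduct.tmul_eq_zero_of_mem_smul_top {S Q M : Type*} [CommRing S]
    [AddCommGroup Q] [Module S Q] [AddCommGroup M] [Module S M] {K : Ideal S}
    (hK : K ≤ Module.annihilator S Q) (q : Q) {m : M} (hm : m ∈ K • (⊤ : Submodule S M)) :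
    q ⊗ₜ[S] m = 0 := by
  refine Submodule.smul_induction_on hm (fun a ha m _ => ?_) (fun y z hy hz => ?_)
  · rw [← smul_tmul, Module.mem_annihilator.mp (hK ha), zero_tmul]
  · rw [tmul_add, hy, hz, add_zero]

theorem LinearMap.lTensor_bijective_of_exact_of_lTensor_eq_zero {R M N P : Type*} (Q : Type*)
    [CommRing R] [AddCommGroup M] [AddCommGroup N] [AddCommGroup P] [AddCommGroup Q]
    [Module R M] [Module R N] [Module R P] [Module R Q] {f : M →ₗ[R] N} {g : N →ₗ[R] P}
    (hfg : Function.Exact f g) (hg : Function.Surjective g) (hf : f.lTensor Q = 0) :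
    Function.Bijective (g.lTensor Q) := by
  have hexact := lTensor_exact Q hfg hg
  rw [hf, exact_zero_iff_injective] at hexact
  exact ⟨hexact, lTensor_surjective Q hg⟩

namespace KaehlerDifferential

variable (R S S' Q : Type*) [CommRing R] [CommRing S] [CommRing S'] [CommRing Q]
  [Algebra R S] [Algebra R S'] [Algebra S S'] [IsScalarTower R S S']
  [Algebra S Q] [Algebra S' Q] [IsScalarTower S S' Q]

theorem baseChange_mapBaseChange_bijective (h : Function.Surjective (algebraMap S S'))
    (hD : ∀ x ∈ RingHom.ker (algebraMap S S'), ∀ q : Q, q ⊗ₜ[S] D R S x = 0) :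
    Function.Bijective ((mapBaseChange R S S').baseChange Q) := by
  rw [LinearMap.baseChange_eq_ltensor]
  refine LinearMap.lTensor_bijective_of_exact_of_lTensor_eq_zero Q
    (LinearMap.exact_subtype_ker_map _) (mapBaseChange_surjective R S S' h) ?_
  ext q ⟨k, hk⟩
  obtain ⟨z, rfl⟩ : k ∈ LinearMap.range (kerCotangentToTensor R S S') := by
    rwa [range_kerCotangentToTensor R S S' h]
  obtain ⟨x, rfl⟩ := Ideal.toCotangent_surjective _ z
  change q ⊗ₜ[S'] ((1 : S') ⊗ₜ[S] D R S x.1) = 0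
  rw [← AlgebraTensorModule.cancelBaseChange_symm_tmul S S' Q, hD x.1 x.2, map_zero]

end KaehlerDifferential

/-- Let `R → S` be a ring map, `I ⊆ S` an ideal, `n ≥ 1`, and `S' = S/I^(n+1)`.
Then the natural map `Ω[S⁄R] → Ω[S'⁄R]` induces an isomorphism
`Ω[S⁄R] ⊗_S (S/Iⁿ) ≅ Ω[S'⁄R] ⊗_{S'} (S/Iⁿ)`. -/
theorem kaehler_quotient_pow_succ_iso
    (R S : Type*) [CommRing R] [CommRing S] [Algebra R S]
    (I : Ideal S) (n : ℕ) :
    letI : Algebra (S ⧸ I ^ (n + 1)) (S ⧸ I ^ n) :=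
      Ideal.Quotient.algebraQuotientOfLEComap (R := S) (A := S)
        (by simpa using Ideal.pow_le_pow_right n.le_succ)
    Nonempty (((S ⧸ I ^ n) ⊗[S] (Ω[S⁄R])) ≃ₗ[S ⧸ I ^ n]
      ((S ⧸ I ^ n) ⊗[S ⧸ I ^ (n + 1)] (Ω[(S ⧸ I ^ (n + 1))⁄R]))) := by
  let : Algebra (S ⧸ I ^ (n + 1)) (S ⧸ I ^ n) :=
    Ideal.Quotient.algebraQuotientOfLEComap (by simpa using Ideal.pow_le_pow_right n.le_succ)
  have : IsScalarTower S (S ⧸ I ^ (n + 1)) (S ⧸ I ^ n) := .of_algebraMap_eq fun _ => rfl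
  have hbij := KaehlerDifferential.baseChange_mapBaseChange_bijective R S (S ⧸ I ^ (n + 1))
    (S ⧸ I ^ n) Ideal.Quotient.mk_surjective fun x hx q => by
      rw [Ideal.Quotient.algebraMap_eq, Ideal.mk_ker] at hx
      exact tmul_eq_zero_of_mem_smul_top (Ideal.annihilator_quotient (I := I ^ n)).ge q
        ((KaehlerDifferential.D R S).apply_mem_pow_smul_top I n hx)
  exact ⟨(AlgebraTensorModule.cancelBaseChange S _ _ _ _).symm ≪≫ₗ .ofBijective _ hbij⟩
end

section
/- Let T be a formally smooth k-algebra over a field k and J ⊆ T an ideal. Then R = T/J is formally smooth over k if and only if the conormal sequence J/J² → Ω_{T/k} ⊗_T R → Ω_{R/k} → 0 is split exact (i.e., the first map is injective and the sequence splits). -/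
universe u

open KaehlerDifferential

theorem formallySmooth_iff_conormal_split_exact_general
    (k T : Type u) [Field k] [CommRing T] [Algebra k T]
    [Algebra.FormallySmooth k T] (J : Ideal T) :
    Algebra.FormallySmooth k (T ⧸ J) ↔
      (Function.Injective (kerCotangentToTensor k T (T ⧸ J)) ∧
        Function.Exact (kerCotangentToTensor k T (T ⧸ J))
          (mapBaseChange k T (T ⧸ J)) ∧
        Function.Surjective (mapBaseChange k T (T ⧸ J)) ∧
        ∃ l, l ∘ₗ kerCotangentToTensor k T (T ⧸ J) = LinearMap.id) := by
  have hsurj : Function.Surjective (algebraMap T (T ⧸ J)) := Ideal.Quotient.mk_surjective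
  -- Exactness of the conormal sequence holds for any surjection, so only the splitting matters.
  rw [Algebra.FormallySmooth.iff_split_injection hsurj]
  exact ⟨fun ⟨l, hl⟩ => ⟨LinearMap.injective_of_comp_eq_id _ l hl,
    exact_kerCotangentToTensor_mapBaseChange k T _ hsurj,
    mapBaseChange_surjective k T _ hsurj, l, hl⟩, fun h => h.2.2.2⟩

/-- Let `T` be a formally smooth `k`-algebra over a field `k` (of characteristic `0`) and
`J ⊆ T` an ideal. Then `R = T/J` is formally smooth over `k` if and only if the conormal
sequence `J/J² → Ω[T⁄k] ⊗[T] R → Ω[R⁄k] → 0` is split exact, i.e. the first map is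
injective, the sequence is exact, and the first map admits a retraction. -/
theorem formallySmooth_iff_conormal_split_exact
    (k T : Type u) [Field k] [CharZero k] [CommRing T] [Algebra k T]
    [Algebra.FormallySmooth k T] (J : Ideal T) :
    Algebra.FormallySmooth k (T ⧸ J) ↔
      (Function.Injective (kerCotangentToTensor k T (T ⧸ J)) ∧
        Function.Exact (kerCotangentToTensor k T (T ⧸ J))
          (mapBaseChange k T (T ⧸ J)) ∧
        Function.Surjective (mapBaseChange k T (T ⧸ J)) ∧
        ∃ l, l ∘ₗ kerCotangentToTensor k T (T ⧸ J) = LinearMap.id) :=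
  formallySmooth_iff_conormal_split_exact_general k T J
end

section
/- Let T be a Noetherian ring, J ⊆ T an ideal, T̂ the J-adic completion, and I ⊇ J an ideal. Then for every T-module M on which every element is killed by a power of J, the natural map M → M ⊗_T T̂ is an isomorphism; in particular the natural map H^q_I(T) → H^q_I(T̂) = H^q_I(T) ⊗_T T̂ is an isomorphism for every q when T is Noetherian and every element of H^q_I(T) is J-power torsion. -/
/-!
Every element `m` of `M` spans a cyclic submodule `T ⧸ torsionOf m`, which is killed by a power of
`J` and hence `J`-adically complete; for such a finite module `T̂ ⊗ N ≅ N̂ = N`. Flatness of `T̂`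
over the Noetherian ring `T` transports this from the cyclic submodules to `M`.
-/

open TensorProduct

section

variable {T : Type*} [CommRing T] {J : Ideal T}
variable {M : Type*} [AddCommGroup M] [Module T M]

theorem IsAdicComplete.of_pow_smul_top_eq_bot {n : ℕ} (h : J ^ n • (⊤ : Submodule T M) = ⊥) :
    IsAdicComplete J M where
  haus' x hx := by simpa [h, SModEq.zero] using hx n
  prec' f hf := by
    refine ⟨f n, fun k ↦ ?_⟩
    have hstable : f n = f (max k n) := by
      simpa [h, SModEq.bot] using hf (le_max_right k n)
    exact hstable ▸ hf (le_max_left k n)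

theorem Ideal.Quotient.smul_top_eq_bot_of_le {K L : Ideal T} (h : L ≤ K) :
    L • (⊤ : Submodule T (T ⧸ K)) = ⊥ := by
  refine eq_bot_iff.mpr (Submodule.smul_le.mpr fun a ha x _ ↦ ?_)
  obtain ⟨t, rfl⟩ := Ideal.Quotient.mk_surjective x
  rw [Algebra.smul_def, Ideal.Quotient.algebraMap_eq, ← map_mul, Submodule.mem_bot,
    Ideal.Quotient.eq_zero_iff_mem]
  exact K.mul_mem_right t (h ha)

end

section

variable {R A : Type*} [CommRing R] [CommRing A] [Algebra R A]
variable {M N : Type*} [AddCommGroup M] [Module R M] [AddCommGroup N] [Module R N]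

theorem TensorProduct.tmul_mem_range_mk_one (ι : N →ₗ[R] M)
    (hN : Function.Surjective (TensorProduct.mk R A N 1)) (a : A) (n : N) :
    a ⊗ₜ ι n ∈ LinearMap.range (TensorProduct.mk R A M 1) := by
  obtain ⟨n', hn'⟩ := hN (a ⊗ₜ n)
  exact ⟨ι n', by simpa using congrArg (ι.lTensor A) hn'⟩

theorem Module.Flat.eq_zero_of_one_tmul_eq_zero [Module.Flat R A] {ι : N →ₗ[R] M}
    (hι : Function.Injective ι) (hN : Function.Injective (TensorProduct.mk R A N 1)) {n : N}
    (h : (1 : A) ⊗ₜ[R] ι n = 0) : n = 0 :=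
  hN <| Module.Flat.lTensor_preserves_injective_linearMap ι hι <| by simpa using h

variable (R A M) in
theorem Module.Flat.mk_one_bijective_of_forall_quotient_torsionOf [Module.Flat R A]
    (h : ∀ m : M, Function.Bijective (TensorProduct.mk R A (R ⧸ Ideal.torsionOf R M m) 1)) :
    Function.Bijective (TensorProduct.mk R A M 1) := by
  let ι (m : M) : R ⧸ Ideal.torsionOf R M m →ₗ[R] M :=
    (R ∙ m).subtype ∘ₗ (Ideal.quotTorsionOfEquivSpanSingleton R M m).toLinearMap
  have hι_inj (m : M) : Function.Injective (ι m) :=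
    Subtype.val_injective.comp (LinearEquiv.injective _)
  have hι_one (m : M) : ι m 1 = m := by
    change ((Ideal.quotTorsionOfEquivSpanSingleton R M m (Submodule.Quotient.mk 1) : M)) = m
    rw [Ideal.quotTorsionOfEquivSpanSingleton_apply_mk, one_smul]
  refine ⟨(injective_iff_map_eq_zero _).mpr fun m hm ↦ ?_, fun x ↦ LinearMap.mem_range.mp ?_⟩
  · rw [← hι_one m] at hm ⊢
    rw [Module.Flat.eq_zero_of_one_tmul_eq_zero (hι_inj m) (h m).1 hm, map_zero]
  · induction x using TensorProduct.induction_on with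
    | zero => exact Submodule.zero_mem _
    | tmul a m => simpa [hι_one] using TensorProduct.tmul_mem_range_mk_one (ι m) (h m).2 a 1
    | add x y hx hy => exact Submodule.add_mem _ hx hy

end

universe u in
theorem AdicCompletion.mk_one_bijective_of_finite {T : Type u} [CommRing T] [IsNoetherianRing T]
    {J : Ideal T} {M : Type u} [AddCommGroup M] [Module T M] [Module.Finite T M]
    [IsAdicComplete J M] :
    Function.Bijective (TensorProduct.mk T (AdicCompletion J T) M 1) := by
  have hcomp : ofTensorProduct J M ∘ TensorProduct.mk T (AdicCompletion J T) M 1 = of J M := by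
    ext x
    simp
  exact (Function.Bijective.of_comp_iff' (ofTensorProduct_bijective_of_finite_of_isNoetherian J M)
    _).mp (hcomp ▸ of_bijective J M)

theorem jPowerTorsion_tensor_adicCompletion_bijective_general
    (T : Type*) [CommRing T] [IsNoetherianRing T] (J : Ideal T)
    (M : Type*) [AddCommGroup M] [Module T M]
    (htors : ∀ m : M, ∃ n : ℕ, ∀ a ∈ J ^ n, a • m = 0) :
    Function.Bijective (TensorProduct.mk T (AdicCompletion J T) M 1) := by
  refine Module.Flat.mk_one_bijective_of_forall_quotient_torsionOf T (AdicCompletion J T) M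
    fun m ↦ ?_
  obtain ⟨n, hn⟩ := htors m
  have : IsAdicComplete J (T ⧸ Ideal.torsionOf T M m) :=
    .of_pow_smul_top_eq_bot (Ideal.Quotient.smul_top_eq_bot_of_le fun a ha ↦ hn a ha)
  exact AdicCompletion.mk_one_bijective_of_finite

/-- Let `T` be a Noetherian ring, `J ⊆ I` ideals, and `T̂` the `J`-adic completion.  For
every `T`-module `M` on which every element is killed by a power of `J` (such as the
local cohomology modules `H^q_I(T)`), the natural map `M → T̂ ⊗_T M`, `m ↦ 1 ⊗ m`, is an
isomorphism. -/
theorem jPowerTorsion_tensor_adicCompletion_bijective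
    (T : Type*) [CommRing T] [IsNoetherianRing T] (J I : Ideal T) (hJI : J ≤ I)
    (M : Type*) [AddCommGroup M] [Module T M]
    (htors : ∀ m : M, ∃ n : ℕ, ∀ a ∈ J ^ n, a • m = 0) :
    Function.Bijective (TensorProduct.mk T (AdicCompletion J T) M 1) :=
  jPowerTorsion_tensor_adicCompletion_bijective_general T J M htors
end
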